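/- Let y ∈ ℝ^m, let k ≥ 1, and let D be a finite-dimensional linear subspace of R = C^∞(ℝ^m,ℝ) which is complementary to the ideal (𝔪_y)^k, i.e., D + (𝔪_y)^k = R and D ∩ (𝔪_y)^k = 0. Then there exists an open neighborhood U of y such that for every tuple (x₁, …, x_k) ∈ U^k one has D + ⋂_{z} (𝔪_z)^{m_z} = R, where z ranges over the distinct values among x₁, …, x_k and m_z is the number of indices i with x_i = z. -/

import Mathlib

open scoped Manifold
open Module

noncomputable section

/-- The ℝ-algebra of smooth real-valued functions on `ℝ^m`. -/
abbrev SmoothFnsE (m : ℕ) : Type _ :=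
  C^(⊤ : ℕ∞)⟮𝓡 m, EuclideanSpace ℝ (Fin m); 𝓘(ℝ, ℝ), ℝ⟯

variable {m : ℕ}

/-- The ideal `𝔪ₓ` of smooth functions on `ℝ^m` vanishing at the point `x`. -/
def mIdealE (x : EuclideanSpace ℝ (Fin m)) : Ideal (SmoothFnsE m) where
  carrier := {f | f x = 0}
  add_mem' := by intro f g hf hg; simp_all
  zero_mem' := by simp
  smul_mem' := by intro c f hf; simp_all

/-- The ideal `⋂_z (𝔪_z)^{m_z}` associated to a tuple `x` of points of `ℝ^m`, where `m_z` is
the number of indices `i` with `x i = z` (for `z` not among the `x i` the factor is the unit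
ideal). -/
def mTupleIdealE {k : ℕ} (x : Fin k → EuclideanSpace ℝ (Fin m)) : Ideal (SmoothFnsE m) :=
  ⨅ z : EuclideanSpace ℝ (Fin m), (mIdealE z) ^ (Nat.card {i : Fin k // x i = z})

/-!
Newton–Hadamard division with moving nodes: iterating Hadamard's lemma
`f t = f x₁ + ∑ⱼ (tⱼ - x₁ⱼ) gⱼ(t, x₁)` (with the earlier nodes as smooth parameters) writes every
smooth `f` as `P_x + r` with `r ∈ ∏ᵢ 𝔪_{xᵢ} ⊆ ⋂_z 𝔪_z^{m_z}` and `P_x` a polynomial of degree `< k`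
whose coefficients depend continuously on the tuple `x`. So it suffices that `D + ∏ᵢ 𝔪_{xᵢ}`
contains every monomial `t^δ` with `|δ| < k`. Split `t^δ = d_δ + h_δ` along `D + 𝔪_y^k`; the
expansion of `h_δ` gives `t^δ - ∑_δ' b_{δδ'}(x) t^δ' ∈ D + ∏ᵢ 𝔪_{xᵢ}` with `b` continuous. At the
diagonal tuple `(y, …, y)` the polynomial part of `h_δ` is a polynomial of degree `< k` lying in
`𝔪_y^k`, hence zero; so `b(y, …, y) = 0`, and `1 - b(x)` stays invertible near the diagonal.
-/

open scoped ContDiff Topology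
open MeasureTheory Metric Filter Asymptotics MvPolynomial

universe u

theorem Submodule.mem_of_isUnit_det_of_sum_smul_mem {R M ι : Type*} [CommRing R] [AddCommGroup M]
    [Module R M] [Fintype ι] [DecidableEq ι] {N : Submodule R M} {A : Matrix ι ι R}
    (hA : IsUnit A.det) {u : ι → M} (h : ∀ i, ∑ j, A i j • u j ∈ N) (i : ι) : u i ∈ N := by
  have hu : u i = ∑ l, A⁻¹ i l • ∑ j, A l j • u j := by
    simp only [Finset.smul_sum, smul_smul]
    rw [Finset.sum_comm]
    simp only [← Finset.sum_smul, ← Matrix.mul_apply, Matrix.nonsing_inv_mul _ hA,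
      Matrix.one_apply, ite_smul, one_smul, zero_smul, Finset.sum_ite_eq, Finset.mem_univ, if_true]
  rw [hu]
  exact N.sum_mem fun l _ => N.smul_mem _ (h l)

theorem eventually_forall_mem_of_sub_sum_smul_mem {𝕜 X M ι : Type*} [Field 𝕜] [TopologicalSpace 𝕜]
    [IsTopologicalRing 𝕜] [T1Space 𝕜] [TopologicalSpace X] [AddCommGroup M] [Module 𝕜 M]
    [Fintype ι] {x₀ : X} {N : X → Submodule 𝕜 M} {u : ι → M} {b : X → Matrix ι ι 𝕜}
    (hb : Continuous b) (hb₀ : b x₀ = 0) (h : ∀ x i, u i - ∑ j, b x i j • u j ∈ N x) :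
    ∀ᶠ x in 𝓝 x₀, ∀ i, u i ∈ N x := by
  classical
  have hdet : ContinuousAt (fun x => (1 - b x).det) x₀ :=
    (continuous_const.sub hb).matrix_det.continuousAt
  filter_upwards [hdet.eventually_ne (by simp [hb₀] : (1 - b x₀).det ≠ 0)] with x hx
  refine Submodule.mem_of_isUnit_det_of_sum_smul_mem (isUnit_iff_ne_zero.mpr hx) fun i => ?_
  simpa [Matrix.sub_apply, Matrix.one_apply, sub_smul, Finset.sum_sub_distrib, ite_smul]
    using h x i

theorem exists_isOpen_forall_mem_of_eventually_nhds_const {ι X : Type*} [Finite ι]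
    [TopologicalSpace X] {y : X} {P : (ι → X) → Prop} (h : ∀ᶠ x in 𝓝 fun _ => y, P x) :
    ∃ U, IsOpen U ∧ y ∈ U ∧ ∀ x : ι → X, (∀ i, x i ∈ U) → P x := by
  rw [nhds_pi, Filter.eventually_iff, Filter.mem_pi'] at h
  obtain ⟨I, t, ht, hsub⟩ := h
  obtain ⟨U, hUt, hU, hyU⟩ := mem_nhds_iff.mp (Filter.iInter_mem.mpr ht)
  exact ⟨U, hU, hyU, fun x hx => hsub fun i _ => Set.mem_iInter.mp (hUt (hx i)) i⟩

instance Finsupp.fintypeDegreeLT {σ : Type*} [Finite σ] (k : ℕ) :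
    Fintype {δ : σ →₀ ℕ | δ.degree < k} :=
  (Finsupp.finite_of_degree_lt k).fintype

theorem MvPolynomial.sum_coeff_smul_monomial_of_mem_restrictSupport {σ R : Type*} [CommSemiring R]
    {s : Set (σ →₀ ℕ)} [Fintype s] {p : MvPolynomial σ R} (hp : p ∈ restrictSupport R s) :
    ∑ δ : s, p.coeff δ • monomial (δ : σ →₀ ℕ) (1 : R) = p := by
  classical
  have hsub : p.support ⊆ s.toFinset := fun δ hδ => Set.mem_toFinset.mpr (hp hδ)
  conv_rhs => rw [← p.support_sum_monomial_coeff,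
    Finset.sum_subset hsub fun δ _ hδ => by rw [notMem_support_iff.mp hδ, monomial_zero]]
  rw [Finset.sum_set_coe (f := fun δ => p.coeff δ • monomial δ (1 : R))]
  simp_rw [smul_monomial, smul_eq_mul, mul_one]

theorem MvPolynomial.X_sub_C_mul_mem_restrictSupport_degree_lt {σ R : Type*} [CommRing R] {k : ℕ}
    {p : MvPolynomial σ R} (hp : p ∈ restrictSupport R {δ | δ.degree < k}) (j : σ) (c : R) :
    (X j - C c) * p ∈ restrictSupport R {δ | δ.degree < k + 1} := by
  have hmono : restrictSupport R {δ : σ →₀ ℕ | δ.degree < k}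
      ≤ restrictSupport R {δ | δ.degree < k + 1} :=
    restrictSupport_mono R fun δ (hδ : δ.degree < k) => (Nat.lt_succ_of_lt hδ : δ.degree < k + 1)
  rw [sub_mul, C_mul']
  refine Submodule.sub_mem _ ?_ (hmono (Submodule.smul_mem _ c hp))
  have hX : X j ∈ restrictSupport R {Finsupp.single j 1} := by simp [X]
  refine restrictSupport_mono R ?_ (restrictSupport_add R _ _ ▸ Submodule.mul_mem_mul hX hp)
  rintro _ ⟨_, rfl, δ, hδ, rfl⟩
  simp only [Set.mem_ofPred_eq, map_add, Finsupp.degree_single] at hδ ⊢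
  omega

theorem MvPolynomial.continuous_coeff_C_add_sum_X_sub_C_mul {σ R T : Type*} [Fintype σ]
    [CommRing R] [TopologicalSpace R] [IsTopologicalRing R] [TopologicalSpace T] {a : T → R}
    {c : T → σ → R} {P : σ → T → MvPolynomial σ R} (ha : Continuous a) (hc : Continuous c)
    (hP : ∀ j δ, Continuous fun x => (P j x).coeff δ) (δ : σ →₀ ℕ) :
    Continuous fun x => (C (a x) + ∑ j, (X j - C (c x j)) * P j x).coeff δ := by
  classical
  simp only [coeff_add, coeff_C, coeff_sum, sub_mul, coeff_sub, coeff_X_mul', coeff_C_mul]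
  refine .add ?_ (continuous_finsetSum _ fun j _ => .sub ?_ (.mul (by fun_prop) (hP j δ)))
  · by_cases h : 0 = δ
    · simpa only [h, if_true] using ha
    · simpa only [h, if_false] using continuous_const
  · by_cases h : j ∈ δ.support
    · simpa only [h, if_true] using hP j _
    · simpa only [h, if_false] using continuous_const

theorem Polynomial.eq_zero_of_isBigO_pow {k : ℕ} {r : Polynomial ℝ} (hdeg : r.natDegree < k)
    (h : (fun s => r.eval s) =O[𝓝[≠] 0] fun s => s ^ k) : r = 0 := by
  induction k generalizing r with
  | zero => omega
  | succ k ih =>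
    have hr0 : r.eval 0 = 0 := by
      refine tendsto_nhds_unique (r.continuous.continuousAt.tendsto.mono_left nhdsWithin_le_nhds)
        (h.trans_tendsto ?_)
      exact ((continuous_pow (k + 1)).tendsto' 0 0 (by simp)).mono_left nhdsWithin_le_nhds
    obtain ⟨r₁, rfl⟩ := (X_dvd_iff (f := r)).mpr (by rwa [coeff_zero_eq_eval_zero])
    by_cases hr₁ : r₁ = 0
    · rw [hr₁, mul_zero]
    have hdiv : (fun s => s⁻¹ * (s * r₁.eval s)) =O[𝓝[≠] 0] fun s => s⁻¹ * s ^ (k + 1) :=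
      (isBigO_refl _ _).mul (by simpa using h)
    rw [ih (r := r₁) (by rw [natDegree_X_mul hr₁] at hdeg; omega) ?_, mul_zero]
    refine hdiv.congr' ?_ ?_ <;> filter_upwards [self_mem_nhdsWithin] with s (hs : s ≠ 0)
    · field_simp
    · field_simp; ring

section ParametricIntegral

variable {E B : Type u} [NormedAddCommGroup E] [NormedSpace ℝ E] [ProperSpace E]
  [NormedAddCommGroup B] [NormedSpace ℝ B]

theorem hasFDerivAt_parametric_intervalIntegral {F : E × ℝ → B} (hF : ContDiff ℝ 1 F)
    (a b : ℝ) (x₀ : E) :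
    HasFDerivAt (fun x => ∫ t in a..b, F (x, t))
      (∫ t in a..b, (fderiv ℝ F (x₀, t)).comp (.inl ℝ E ℝ)) x₀ := by
  have hF' : Continuous fun p : E × ℝ => (fderiv ℝ F p).comp (.inl ℝ E ℝ) :=
    ((ContinuousLinearMap.compL ℝ E (E × ℝ) B).flip (.inl ℝ E ℝ)).continuous.comp
      (hF.continuous_fderiv one_ne_zero)
  obtain ⟨C, hC⟩ := ((isCompact_closedBall x₀ 1).prod
    (isCompact_uIcc (a := a) (b := b))).exists_bound_of_continuousOn hF'.continuousOn
  refine intervalIntegral.hasFDerivAt_integral_of_dominated_of_fderiv_le (𝕜 := ℝ)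
    (F := fun x t => F (x, t)) (F' := fun x t => (fderiv ℝ F (x, t)).comp (.inl ℝ E ℝ))
    (ball_mem_nhds x₀ one_pos) (bound := fun _ => C) ?_ ?_ ?_ ?_
    (intervalIntegrable_const (μ := volume)) ?_
  · exact .of_forall fun x => (hF.continuous.comp (.prodMk_right x)).aestronglyMeasurable
  · exact (hF.continuous.comp (.prodMk_right x₀)).intervalIntegrable a b
  · exact (hF'.comp (.prodMk_right x₀)).aestronglyMeasurable
  · exact .of_forall fun t ht x hx =>
      hC (x, t) ⟨ball_subset_closedBall hx, Set.uIoc_subset_uIcc ht⟩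
  · refine .of_forall fun t _ x _ => ?_
    exact (hF.differentiable one_ne_zero (x, t)).hasFDerivAt.comp x (hasFDerivAt_prodMk_left x t)

theorem contDiff_parametric_intervalIntegral [CompleteSpace B] {F : E × ℝ → B}
    (hF : ContDiff ℝ ∞ F) (a b : ℝ) : ContDiff ℝ ∞ fun x => ∫ t in a..b, F (x, t) := by
  refine contDiff_infty.2 fun n => ?_
  induction n generalizing B with
  | zero =>
    exact contDiff_zero.2 <| intervalIntegral.continuous_parametric_intervalIntegral_of_continuous'
      (f := Function.curry F) hF.continuous a b
  | succ n ih =>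
    have hF1 : ContDiff ℝ 1 F := hF.of_le (by exact_mod_cast le_top)
    rw [Nat.cast_succ, contDiff_succ_iff_fderiv]
    refine ⟨fun x => (hasFDerivAt_parametric_intervalIntegral hF1 a b x).differentiableAt,
      by simp, ?_⟩
    rw [funext fun x => (hasFDerivAt_parametric_intervalIntegral hF1 a b x).fderiv]
    exact ih (((ContinuousLinearMap.compL ℝ E (E × ℝ) B).flip (.inl ℝ E ℝ)).contDiff.comp
      (hF.fderiv_right (by simp)))

theorem contDiff_intervalIntegral_fderiv_segment [CompleteSpace B] {f : E → B}
    (hf : ContDiff ℝ ∞ f) :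
    ContDiff ℝ ∞ fun pp : E × E => ∫ s in (0:ℝ)..1, fderiv ℝ f (pp.2 + s • (pp.1 - pp.2)) :=
  contDiff_parametric_intervalIntegral (F := fun p : (E × E) × ℝ =>
    fderiv ℝ f (p.1.2 + p.2 • (p.1.1 - p.1.2))) ((hf.fderiv_right (by simp)).comp (by fun_prop)) 0 1

end ParametricIntegral

theorem sub_eq_intervalIntegral_fderiv_apply {E B : Type*} [NormedAddCommGroup E]
    [NormedSpace ℝ E] [NormedAddCommGroup B] [NormedSpace ℝ B] [CompleteSpace B] {f : E → B}
    (hf : ContDiff ℝ 1 f) (p p' : E) :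
    f p' - f p = (∫ s in (0:ℝ)..1, fderiv ℝ f (p + s • (p' - p))) (p' - p) := by
  have hcont : Continuous fun s : ℝ => fderiv ℝ f (p + s • (p' - p)) :=
    (hf.continuous_fderiv one_ne_zero).comp (by fun_prop)
  have hderiv (s : ℝ) : HasDerivAt (fun s : ℝ => f (p + s • (p' - p)))
      (fderiv ℝ f (p + s • (p' - p)) (p' - p)) s := by
    refine (hf.differentiable one_ne_zero _).hasFDerivAt.comp_hasDerivAt s ?_
    simpa using ((hasDerivAt_id s).smul_const (p' - p)).const_add p
  rw [ContinuousLinearMap.intervalIntegral_apply (hcont.intervalIntegrable 0 1),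
    intervalIntegral.integral_eq_sub_of_hasDerivAt (fun s _ => hderiv s)
      ((hcont.clm_apply continuous_const).intervalIntegrable 0 1)]
  simp

theorem exists_contDiff_hadamard {ι Q : Type} [Fintype ι] [NormedAddCommGroup Q]
    [NormedSpace ℝ Q] [ProperSpace Q] {F : EuclideanSpace ℝ ι × Q → ℝ} (hF : ContDiff ℝ ∞ F) :
    ∃ G : ι → EuclideanSpace ℝ ι × (EuclideanSpace ℝ ι × Q) → ℝ, (∀ j, ContDiff ℝ ∞ (G j)) ∧
      ∀ t x q, F (t, q) = F (x, q) + ∑ j, (t j - x j) * G j (t, (x, q)) := by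
  classical
  set H := fun pp : (EuclideanSpace ℝ ι × Q) × (EuclideanSpace ℝ ι × Q) =>
    ∫ s in (0:ℝ)..1, fderiv ℝ F (pp.2 + s • (pp.1 - pp.2))
  have hH : ContDiff ℝ ∞ H := contDiff_intervalIntegral_fderiv_segment hF
  refine ⟨fun j p => H ((p.1, p.2.2), p.2) (EuclideanSpace.single j 1, 0), fun j => ?_,
    fun t x q => ?_⟩
  · have : ContDiff ℝ ∞ fun p : EuclideanSpace ℝ ι × (EuclideanSpace ℝ ι × Q) =>
        ((p.1, p.2.2), p.2) := by fun_prop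
    exact (hH.comp this).clm_apply contDiff_const
  · have hv : (t, q) - (x, q) =
        ∑ j, (t j - x j) • ((EuclideanSpace.single j 1 : EuclideanSpace ℝ ι), (0 : Q)) := by
      ext i <;> simp [Prod.fst_sum, Prod.snd_sum, Pi.single_apply]
    rw [← sub_eq_iff_eq_add',
      sub_eq_intervalIntegral_fderiv_apply (hF.of_le (by simp)) (x, q) (t, q)]
    conv_lhs => arg 2; rw [hv]
    simp only [map_sum, map_smul, smul_eq_mul, H]

local notation "Em" => EuclideanSpace ℝ (Fin m)

def ContDiff.toSmoothFnsE {f : Em → ℝ} (hf : ContDiff ℝ ∞ f) : SmoothFnsE m :=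
  ⟨f, hf.contMDiff⟩

@[simp]
theorem ContDiff.toSmoothFnsE_apply {f : Em → ℝ} (hf : ContDiff ℝ ∞ f) (t : Em) :
    hf.toSmoothFnsE t = f t := rfl

@[simp]
theorem SmoothFnsE.sum_apply {ι : Type*} (s : Finset ι) (f : ι → SmoothFnsE m) (t : Em) :
    (∑ i ∈ s, f i) t = ∑ i ∈ s, f i t :=
  map_sum (ContMDiffMap.evalRingHom t) f s

@[simp]
theorem SmoothFnsE.mul_apply (f g : SmoothFnsE m) (t : Em) : (f * g) t = f t * g t := rfl

def coordFn (j : Fin m) : SmoothFnsE m :=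
  (EuclideanSpace.proj j : Em →L[ℝ] ℝ).contDiff.toSmoothFnsE

def polyFn : MvPolynomial (Fin m) ℝ →ₐ[ℝ] SmoothFnsE m := aeval coordFn

@[simp]
theorem polyFn_apply (p : MvPolynomial (Fin m) ℝ) (t : Em) :
    polyFn p t = eval (fun j => t j) p := by
  induction p using MvPolynomial.induction_on with
  | C a => simp only [polyFn, aeval_C, eval_C]; rfl
  | add p q hp hq => simp [hp, hq]
  | mul_X p j hp =>
    rw [map_mul, ContMDiffMap.coe_mul, Pi.mul_apply, hp, polyFn, aeval_X, eval_mul, eval_X]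
    rfl

theorem polyFn_X_sub_C_mem_mIdealE (x : Em) (j : Fin m) :
    polyFn (X j - C (x j)) ∈ mIdealE x := by
  change polyFn _ x = 0
  simp only [polyFn_apply, eval_sub, eval_X, eval_C, sub_self]

theorem prod_mIdealE_le_mTupleIdealE {k : ℕ} (x : Fin k → Em) :
    ∏ i, mIdealE (x i) ≤ mTupleIdealE x := by
  classical
  refine le_iInf fun z => ?_
  have hz : ∏ i ∈ Finset.univ.filter (x · = z), mIdealE (x i)
      = mIdealE z ^ Nat.card {i : Fin k // x i = z} := by
    rw [Finset.prod_congr rfl fun i hi => by rw [(Finset.mem_filter.mp hi).2], Finset.prod_const,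
      Nat.card_eq_fintype_card, Fintype.card_subtype]
  rw [← Finset.prod_filter_mul_prod_filter_not Finset.univ (x · = z), hz]
  exact Ideal.mul_le_left

theorem isBigO_of_mem_mIdealE_pow {y : Em} {k : ℕ} {f : SmoothFnsE m} (hf : f ∈ mIdealE y ^ k) :
    (f : Em → ℝ) =O[𝓝 y] fun t => ‖t - y‖ ^ k := by
  induction k generalizing f with
  | zero => simpa using f.contMDiff.continuous.continuousAt.tendsto.isBigO_one ℝ
  | succ k ih =>
    rw [pow_succ] at hf
    refine Submodule.mul_induction_on hf (fun a ha b (hb : b y = 0) => ?_)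
      fun a b ha hb => ha.add hb
    have hb' : (b : Em → ℝ) =O[𝓝 y] fun t => ‖t - y‖ := by
      have hbd := ((contMDiff_iff_contDiff.mp b.contMDiff).differentiable (by simp) y).hasFDerivAt
      simpa [hb] using hbd.isBigO_sub.norm_right
    exact ((ih ha).mul hb').congr_right fun t => (pow_succ _ _).symm

theorem eq_zero_of_polyFn_mem_mIdealE_pow {k : ℕ} {p : MvPolynomial (Fin m) ℝ}
    (hp : p ∈ restrictSupport ℝ {δ | δ.degree < k}) {y : Em} (hmem : polyFn p ∈ mIdealE y ^ k) :
    p = 0 := by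
  rcases Nat.eq_zero_or_pos k with rfl | hk
  · simpa [mem_restrictSupport_iff] using hp
  have hdeg : p.totalDegree < k := (Finset.sup_lt_iff hk).2 fun δ hδ => hp hδ
  have hline (v : Em) : eval (fun j => y j + v j) p = 0 := by
    set r := aeval (fun j => Polynomial.C (y j) + Polynomial.C (v j) * Polynomial.X) p
    have hr (s : ℝ) : r.eval s = polyFn p (y + s • v) := by
      rw [polyFn_apply, ← Polynomial.coe_aeval_eq_eval, comp_aeval_apply, ← coe_aeval_eq_eval]
      simp only [Polynomial.coe_aeval_eq_eval, Polynomial.eval_add, Polynomial.eval_C,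
        Polynomial.eval_mul, Polynomial.eval_X, coe_aeval_eq_eval, PiLp.add_apply,
        PiLp.smul_apply, smul_eq_mul, mul_comm]
      rfl
    have hrdeg : r.natDegree < k := by
      refine (aeval_natDegree_le (n := 1) p le_rfl _ fun j => ?_).trans_lt (by simpa using hdeg)
      exact (Polynomial.natDegree_add_le _ _).trans (max_le (by simp)
        ((Polynomial.natDegree_C_mul_le _ _).trans (by simp)))
    have hlim : Tendsto (fun s : ℝ => y + s • v) (𝓝 0) (𝓝 y) := by
      simpa using tendsto_const_nhds.add ((tendsto_id (x := 𝓝 (0 : ℝ))).smul_const v)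
    have hO : (fun s => r.eval s) =O[𝓝[≠] 0] fun s => s ^ k := by
      refine (((isBigO_of_mem_mIdealE_pow hmem).comp_tendsto hlim).trans
        (isBigO_of_le' (c := ‖v‖ ^ k) _ fun s => ?_)).mono nhdsWithin_le_nhds |>.congr_left
        fun s => (hr s).symm
      simp [norm_smul, mul_pow, mul_comm]
    simpa [hr] using congrArg (Polynomial.eval 1) (Polynomial.eq_zero_of_isBigO_pow hrdeg hO)
  exact MvPolynomial.funext fun z => by simpa using hline (WithLp.toLp 2 z - y)

theorem exists_smoothFamily_hadamard {Q : Type} [NormedAddCommGroup Q] [NormedSpace ℝ Q]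
    [ProperSpace Q] (F : Q → SmoothFnsE m) (hF : ContDiff ℝ ∞ fun p : Em × Q => F p.2 p.1) :
    ∃ G : Fin m → Em × Q → SmoothFnsE m,
      (∀ j, ContDiff ℝ ∞ fun p : Em × (Em × Q) => G j p.2 p.1) ∧
      ∀ x q, F q = polyFn (C (F q x)) + ∑ j, polyFn (X j - C (x j)) * G j (x, q) := by
  obtain ⟨G, hG, hFG⟩ := exists_contDiff_hadamard hF
  refine ⟨fun j p => ((hG j).comp (contDiff_prodMk_left p)).toSmoothFnsE, hG,
    fun x q => ContMDiffMap.ext fun t => ?_⟩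
  simp only [ContMDiffMap.coe_add, Pi.add_apply, SmoothFnsE.sum_apply, SmoothFnsE.mul_apply,
    polyFn_apply, eval_C, eval_sub, eval_X, ContDiff.toSmoothFnsE_apply]
  exact hFG t x q

theorem exists_family_polyFn_sub_mem_prod_mIdealE (k : ℕ) {Q : Type} [NormedAddCommGroup Q]
    [NormedSpace ℝ Q] [ProperSpace Q] (F : Q → SmoothFnsE m)
    (hF : ContDiff ℝ ∞ fun p : Em × Q => F p.2 p.1) :
    ∃ P : (Fin k → Em) → Q → MvPolynomial (Fin m) ℝ,
      (∀ x q, P x q ∈ restrictSupport ℝ {δ | δ.degree < k}) ∧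
      (∀ δ, Continuous fun p : (Fin k → Em) × Q => (P p.1 p.2).coeff δ) ∧
      ∀ x q, F q - polyFn (P x q) ∈ ∏ i, mIdealE (x i) := by
  induction k generalizing Q with
  | zero => exact ⟨0, by simp, by simp [continuous_const], by simp⟩
  | succ k ih =>
    obtain ⟨G, hG, hFG⟩ := exists_smoothFamily_hadamard F hF
    choose P hPdeg hPcont hPrem using fun j => ih (G j) (hG j)
    refine ⟨fun x q => C (F q (x 0)) + ∑ j, (X j - C (x 0 j)) * P j (Fin.tail x) (x 0, q),
      fun x q => ?_, fun δ => ?_, fun x q => ?_⟩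
    · refine Submodule.add_mem _ (by rw [C_apply, monomial_mem_restrictSupport]; simp)
        (Submodule.sum_mem _ fun j _ => ?_)
      exact X_sub_C_mul_mem_restrictSupport_degree_lt (hPdeg j _ _) j _
    · have hshift : Continuous fun p : (Fin (k + 1) → Em) × Q => (Fin.tail p.1, (p.1 0, p.2)) :=
        .prodMk (continuous_pi fun i => (continuous_apply i.succ).comp continuous_fst) (by fun_prop)
      have ha : Continuous fun p : (Fin (k + 1) → Em) × Q => F p.2 (p.1 0) :=
        hF.continuous.comp (f := fun p : (Fin (k + 1) → Em) × Q => (p.1 0, p.2)) (by fun_prop)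
      have hc : Continuous fun p : (Fin (k + 1) → Em) × Q => fun j => p.1 0 j :=
        (PiLp.continuous_ofLp 2 _).comp ((continuous_apply 0).comp continuous_fst)
      exact continuous_coeff_C_add_sum_X_sub_C_mul ha hc (fun j δ => (hPcont j δ).comp hshift) δ
    · have hrem : F q - polyFn (C (F q (x 0)) + ∑ j, (X j - C (x 0 j)) * P j (Fin.tail x) (x 0, q))
          = ∑ j, polyFn (X j - C (x 0 j)) * (G j (x 0, q) - polyFn (P j (Fin.tail x) (x 0, q))) := by
        nth_rewrite 1 [hFG (x 0) q]
        simp only [map_add, map_sum, map_mul, mul_sub, Finset.sum_sub_distrib]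
        abel
      rw [hrem, Fin.prod_univ_succ]
      exact Ideal.sum_mem _ fun j _ =>
        Ideal.mul_mem_mul (polyFn_X_sub_C_mem_mIdealE _ j) (hPrem j _ _)

theorem exists_polyFn_sub_mem_prod_mIdealE (k : ℕ) (f : SmoothFnsE m) :
    ∃ P : (Fin k → Em) → MvPolynomial (Fin m) ℝ,
      (∀ x, P x ∈ restrictSupport ℝ {δ | δ.degree < k}) ∧
      (∀ δ, Continuous fun x => (P x).coeff δ) ∧
      ∀ x, f - polyFn (P x) ∈ ∏ i, mIdealE (x i) := by
  obtain ⟨P, hPdeg, hPcont, hPrem⟩ := exists_family_polyFn_sub_mem_prod_mIdealE k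
    (fun _ : Unit => f) ((contMDiff_iff_contDiff.mp f.contMDiff).comp contDiff_fst)
  exact ⟨fun x => P x (), fun x => hPdeg x (),
    fun δ => (hPcont δ).comp (continuous_id.prodMk continuous_const), fun x => hPrem x ()⟩

theorem sup_mTupleIdealE_eq_top_of_monomial_mem {D : Submodule ℝ (SmoothFnsE m)} {k : ℕ}
    (x : Fin k → Em) (h : ∀ δ : Fin m →₀ ℕ, δ.degree < k →
      polyFn (monomial δ 1) ∈ D ⊔ (mTupleIdealE x).restrictScalars ℝ) :
    D ⊔ (mTupleIdealE x).restrictScalars ℝ = ⊤ := by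
  refine eq_top_iff.mpr fun f _ => ?_
  obtain ⟨P, hPdeg, -, hPrem⟩ := exists_polyFn_sub_mem_prod_mIdealE k f
  have hspan : restrictSupport ℝ {δ : Fin m →₀ ℕ | δ.degree < k}
      ≤ (D ⊔ (mTupleIdealE x).restrictScalars ℝ).comap polyFn.toLinearMap := by
    rw [restrictSupport_eq_span, Submodule.span_le]
    rintro _ ⟨δ, hδ, rfl⟩
    exact h δ hδ
  rw [← add_sub_cancel (polyFn (P x)) f]
  exact add_mem (hspan (hPdeg x))
    (Submodule.mem_sup_right (prod_mIdealE_le_mTupleIdealE x (hPrem x)))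

theorem exists_continuous_monomial_relations {y : Em} {k : ℕ} {D : Submodule ℝ (SmoothFnsE m)}
    (hsup : D ⊔ (mIdealE y ^ k).restrictScalars ℝ = ⊤) :
    ∃ b : (Fin k → Em) →
        Matrix {δ : Fin m →₀ ℕ | δ.degree < k} {δ : Fin m →₀ ℕ | δ.degree < k} ℝ,
      Continuous b ∧ b (fun _ => y) = 0 ∧
        ∀ x δ, polyFn (monomial δ.1 1) - ∑ δ', b x δ δ' • polyFn (monomial δ'.1 1)
          ∈ D ⊔ (mTupleIdealE x).restrictScalars ℝ := by
  have hdec (δ : {δ : Fin m →₀ ℕ | δ.degree < k}) :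
      ∃ d ∈ D, ∃ h ∈ (mIdealE y ^ k).restrictScalars ℝ, d + h = polyFn (monomial δ.1 1) :=
    Submodule.mem_sup.mp (hsup ▸ Submodule.mem_top)
  choose d hd h hh hdh using hdec
  choose P hPdeg hPcont hPrem using fun δ => exists_polyFn_sub_mem_prod_mIdealE k (h δ)
  have hexpand (x δ) : ∑ δ' : {δ : Fin m →₀ ℕ | δ.degree < k},
      (P δ x).coeff δ' • polyFn (monomial δ'.1 1) = polyFn (P δ x) := by
    conv_rhs => rw [← sum_coeff_smul_monomial_of_mem_restrictSupport (hPdeg δ x)]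
    simp only [map_sum, map_smul]
  refine ⟨fun x δ δ' => (P δ x).coeff δ',
    continuous_pi fun δ => continuous_pi fun δ' => hPcont δ δ', ?_, fun x δ => ?_⟩
  · ext δ δ'
    have hmem : polyFn (P δ fun _ => y) ∈ mIdealE y ^ k := by
      have hrem := hPrem δ fun _ => y
      rw [Finset.prod_const, Finset.card_fin] at hrem
      simpa using Ideal.sub_mem _ (hh δ) hrem
    simp [eq_zero_of_polyFn_mem_mIdealE_pow (hPdeg δ _) hmem]
  · rw [hexpand, ← hdh δ, add_sub_assoc]
    exact add_mem (Submodule.mem_sup_left (hd δ))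
      (Submodule.mem_sup_right (prod_mIdealE_le_mTupleIdealE x (hPrem δ x)))

theorem exists_nhd_transverse_of_complement_general
    (m : ℕ) (y : EuclideanSpace ℝ (Fin m)) (k : ℕ)
    (D : Submodule ℝ (SmoothFnsE m))
    (hsup : D ⊔ ((mIdealE y ^ k).restrictScalars ℝ) = ⊤) :
    ∃ U : Set (EuclideanSpace ℝ (Fin m)), IsOpen U ∧ y ∈ U ∧
      ∀ x : Fin k → EuclideanSpace ℝ (Fin m), (∀ i, x i ∈ U) →
        D ⊔ (mTupleIdealE x).restrictScalars ℝ = ⊤ := by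
  obtain ⟨b, hb, hb₀, hrel⟩ := exists_continuous_monomial_relations hsup
  obtain ⟨U, hU, hyU, hUx⟩ := exists_isOpen_forall_mem_of_eventually_nhds_const
    (eventually_forall_mem_of_sub_sum_smul_mem hb hb₀ hrel)
  exact ⟨U, hU, hyU, fun x hx =>
    sup_mTupleIdealE_eq_top_of_monomial_mem x fun δ hδ => hUx x hx ⟨δ, hδ⟩⟩

/-- If `D` is a finite-dimensional complement of the ideal `(𝔪_y)^k` in
`R = C^∞(ℝ^m,ℝ)`, then there is an open neighbourhood `U` of `y` such that for every tuple
`(x 1, …, x k) ∈ U^k` the subspace `D` is transverse to `⋂_z (𝔪_z)^{m_z}`, the intersection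
being over the distinct values `z` among the `x i` with multiplicities `m_z`. -/
theorem exists_nhd_transverse_of_complement
    (m : ℕ) (y : EuclideanSpace ℝ (Fin m)) (k : ℕ) (hk : 1 ≤ k)
    (D : Submodule ℝ (SmoothFnsE m)) (hDfd : FiniteDimensional ℝ D)
    (hsup : D ⊔ ((mIdealE y ^ k).restrictScalars ℝ) = ⊤)
    (hinf : D ⊓ ((mIdealE y ^ k).restrictScalars ℝ) = ⊥) :
    ∃ U : Set (EuclideanSpace ℝ (Fin m)), IsOpen U ∧ y ∈ U ∧
      ∀ x : Fin k → EuclideanSpace ℝ (Fin m), (∀ i, x i ∈ U) →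
        D ⊔ (mTupleIdealE x).restrictScalars ℝ = ⊤ :=
  exists_nhd_transverse_of_complement_general m y k D hsup

end
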